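/- arXiv:1109.4347 — 2 statements merged into one kernel-verified Lean document; each statement's English description precedes it below -/
import Mathlib

section
/- For every positive integer d, no subset of ℝ^d of cardinality (d² + 3d)/2 + 1 is shattered by the class of all d-dimensional ellipsoids; i.e., the VC dimension of the class of d-dimensional ellipsoids is at most (d² + 3d)/2. -/
open Matrix

/-- A class `C` of subsets of `α` shatters a set `X` if every subset of `X`
is cut out of `X` by some member of `C`. -/
def Shatters {α : Type*} (C : Set (Set α)) (X : Set α) : Prop :=
  ∀ Y ⊆ X, ∃ B ∈ C, Y = X ∩ B

/-- The VC dimension of a class `C` of subsets: the supremum (in `ℕ∞`) of the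
cardinalities of finite sets shattered by `C`. -/
noncomputable def vcDim {α : Type*} (C : Set (Set α)) : ℕ∞ :=
  ⨆ (X : Finset α) (_ : Shatters C (X : Set α)), (X.card : ℕ∞)

/-- A `d`-dimensional ellipsoid: `{x ∈ ℝ^d : (x-μ)ᵀ A (x-μ) < 1}` for a center
`μ ∈ ℝ^d` and a (symmetric) positive definite matrix `A`. -/
def IsEllipsoid {d : ℕ} (E : Set (Fin d → ℝ)) : Prop :=
  ∃ (μ : Fin d → ℝ) (A : Matrix (Fin d) (Fin d) ℝ), A.PosDef ∧
    E = {x | (x - μ) ⬝ᵥ A.mulVec (x - μ) < 1}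

/-!
If `X` has more than `(d² + 3d)/2` points, there is a nonzero weight `c : X → ℝ` with
`∑ c x = 0`, `∑ c x • x = 0` and `∑ c x • x xᵀ = t • 1`: these are only
`1 + d + (d(d+1)/2 - 1)` linear conditions once the trace direction is discarded.
For every ellipsoid `(x - μ)ᵀ A (x - μ) < 1` this gives `∑ c x * (x - μ)ᵀ A (x - μ) = t * tr A`.
An ellipsoid cutting out `{x | 0 < c x}` makes the left side smaller than `∑ c x = 0`, so `t < 0`;
one cutting out `{x | c x < 0}` gives `t > 0` in the same way.
-/

section Shatters

variable {α : Type*} {C : Set (Set α)} {X : Set α}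

theorem Shatters.mono {X' : Set α} (h : Shatters C X) (hX' : X' ⊆ X) : Shatters C X' := by
  intro Y hY
  obtain ⟨B, hB, hYB⟩ := h Y (hY.trans hX')
  refine ⟨B, hB, ?_⟩
  calc Y = X' ∩ Y := (Set.inter_eq_right.mpr hY).symm
    _ = X' ∩ B := by rw [hYB, ← Set.inter_assoc, Set.inter_eq_left.mpr hX']

theorem Shatters.exists_forall_iff_mem (h : Shatters C X) (p : X → Prop) :
    ∃ B ∈ C, ∀ x : X, p x ↔ (x : α) ∈ B := by
  obtain ⟨B, hB, hY⟩ := h {a | ∃ ha : a ∈ X, p ⟨a, ha⟩} fun a ⟨ha, _⟩ => ha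
  refine ⟨B, hB, fun x => ?_⟩
  have := congrArg ((x : α) ∈ ·) hY
  simpa [x.2] using this

theorem vcDim_le_of_forall_card_eq_not_shatters {k : ℕ}
    (h : ∀ X : Finset α, X.card = k + 1 → ¬ Shatters C X) : vcDim C ≤ k := by
  refine iSup₂_le fun X hX => ?_
  by_contra! hk
  obtain ⟨X', hX'X, hX'⟩ :=
    Finset.exists_subset_card_eq (Order.add_one_le_of_lt (by exact_mod_cast hk))
  exact h X' hX' (hX.mono (Finset.coe_subset.mpr hX'X))

end Shatters

theorem Matrix.dotProduct_mulVec_self_eq_trace {κ : Type*} [Fintype κ] (A : Matrix κ κ ℝ)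
    (v : κ → ℝ) : v ⬝ᵥ A *ᵥ v = trace (A * vecMulVec v v) := by
  rw [mul_vecMulVec, trace_vecMulVec, dotProduct_comm]

section IsotropicRelation

variable {ι κ : Type*} [Fintype ι] [DecidableEq κ]

def IsIsotropicRelation (x : ι → κ → ℝ) (c : ι → ℝ) (t : ℝ) : Prop :=
  ∑ i, c i = 0 ∧ ∑ i, c i • x i = 0 ∧ ∑ i, c i • vecMulVec (x i) (x i) = t • 1

variable {x : ι → κ → ℝ} {c : ι → ℝ} {t : ℝ}

theorem IsIsotropicRelation.neg (h : IsIsotropicRelation x c t) :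
    IsIsotropicRelation x (-c) (-t) := by
  obtain ⟨h₀, h₁, h₂⟩ := h
  refine ⟨?_, ?_, ?_⟩ <;> simp [neg_smul, Finset.sum_neg_distrib, h₀, h₁, h₂]

theorem IsIsotropicRelation.sub_const (h : IsIsotropicRelation x c t) (μ : κ → ℝ) :
    IsIsotropicRelation (fun i => x i - μ) c t := by
  obtain ⟨h₀, h₁, h₂⟩ := h
  refine ⟨h₀, ?_, ?_⟩
  · simp [smul_sub, Finset.sum_sub_distrib, ← Finset.sum_smul, h₀, h₁]
  · ext p q
    have h₁p := congrFun h₁ p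
    have h₁q := congrFun h₁ q
    have h₂pq := congrFun (congrFun h₂ p) q
    simp only [Finset.sum_apply, Matrix.sum_apply, Pi.smul_apply, Matrix.smul_apply,
      vecMulVec_apply, Pi.sub_apply, smul_eq_mul, Pi.zero_apply] at h₁p h₁q h₂pq ⊢
    calc ∑ i, c i * ((x i p - μ p) * (x i q - μ q))
        = ∑ i, c i * (x i p * x i q) - μ q * ∑ i, c i * x i p - μ p * ∑ i, c i * x i q
          + μ p * μ q * ∑ i, c i := by
          simp only [Finset.mul_sum, ← Finset.sum_sub_distrib, ← Finset.sum_add_distrib]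
          exact Finset.sum_congr rfl fun i _ => by ring
      _ = t * (1 : Matrix κ κ ℝ) p q := by rw [h₂pq, h₁p, h₁q, h₀]; ring

theorem IsIsotropicRelation.sum_mul_dotProduct_mulVec [Fintype κ] (h : IsIsotropicRelation x c t)
    (A : Matrix κ κ ℝ) : ∑ i, c i * (x i ⬝ᵥ A *ᵥ x i) = t * trace A :=
  calc ∑ i, c i * (x i ⬝ᵥ A *ᵥ x i) = trace (A * ∑ i, c i • vecMulVec (x i) (x i)) := by
        simp [dotProduct_mulVec_self_eq_trace, Matrix.mul_sum, trace_sum, trace_smul]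
    _ = t * trace A := by rw [h.2.2, Matrix.mul_smul, Matrix.mul_one, trace_smul, smul_eq_mul]

end IsotropicRelation

open Module Fintype in
theorem exists_isIsotropicRelation {ι κ : Type*} [Fintype ι] [Fintype κ] [DecidableEq κ]
    [Nonempty κ] (hι : (card κ ^ 2 + 3 * card κ) / 2 < card ι) (x : ι → κ → ℝ) :
    ∃ c ≠ 0, ∃ t, IsIsotropicRelation x c t := by
  let φ : (κ → ℝ) → ℝ × (κ → ℝ) × (Sym2 κ → ℝ) :=
    fun v => (1, v, Sym2.lift ⟨fun p q => v p * v q, fun _ _ => mul_comm _ _⟩)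
  -- Modding out the trace direction `e` saves the one dimension that the count needs.
  let e : ℝ × (κ → ℝ) × (Sym2 κ → ℝ) := (0, 0, fun s => if s.IsDiag then 1 else 0)
  have he : e ≠ 0 := fun h => by
    simpa [e] using congrFun (congrArg (·.2.2) h) s(Classical.arbitrary κ, Classical.arbitrary κ)
  have hdim : finrank ℝ ((ℝ × (κ → ℝ) × (Sym2 κ → ℝ)) ⧸ ℝ ∙ e) < finrank ℝ (ι → ℝ) := by
    have hsplit := (ℝ ∙ e).finrank_quotient_add_finrank
    have hcount : (card κ + 1).choose 2 + card κ = (card κ ^ 2 + 3 * card κ) / 2 := by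
      rw [Nat.choose_two_right, Nat.add_sub_cancel, ← Nat.add_mul_div_right _ _ two_pos]
      congr 1
      ring
    simp only [finrank_span_singleton he, finrank_prod, finrank_self,
      finrank_fintype_fun_eq_card, Sym2.card] at hsplit ⊢
    omega
  obtain ⟨c, hc, hc0⟩ := (Submodule.ne_bot_iff _).mp (LinearMap.ker_ne_bot_of_finrank_lt
    (f := (ℝ ∙ e).mkQ ∘ₗ Fintype.linearCombination ℝ (φ ∘ x)) hdim)
  obtain ⟨t, ht⟩ := Submodule.mem_span_singleton.mp <| (Submodule.Quotient.mk_eq_zero _).mp hc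
  simp only [Fintype.linearCombination_apply, Function.comp_apply, φ, e, Prod.smul_mk,
    Prod.ext_iff, Prod.fst_sum, Prod.snd_sum, smul_zero] at ht
  obtain ⟨ht₀, ht₁, ht₂⟩ := ht
  refine ⟨c, hc0, t, by simpa using ht₀.symm, ht₁.symm, ?_⟩
  ext p q
  have := congrFun ht₂ s(p, q)
  simp only [Finset.sum_apply, Pi.smul_apply, Sym2.lift_mk, Sym2.mk_isDiag_iff, smul_eq_mul,
    mul_ite, mul_one, mul_zero] at this
  simp [Matrix.sum_apply, vecMulVec_apply, Matrix.one_apply, this]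

theorem sum_mul_neg_of_pos_iff_lt_one {ι : Type*} [Fintype ι] {c q : ι → ℝ}
    (hc : ∑ i, c i = 0) (hpos : ∃ i, 0 < c i) (hq : ∀ i, 0 < c i ↔ q i < 1) :
    ∑ i, c i * q i < 0 := by
  have hterm (i : ι) : c i * (q i - 1) ≤ 0 := by
    by_cases hci : 0 < c i
    · nlinarith [(hq i).mp hci]
    · nlinarith [(hq i).not.mp hci]
  obtain ⟨j, hj⟩ := hpos
  calc ∑ i, c i * q i = ∑ i, c i * (q i - 1) := by
        simp [mul_sub, Finset.sum_sub_distrib, hc]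
    _ < ∑ _i : ι, (0 : ℝ) :=
        Finset.sum_lt_sum (fun i _ => hterm i) ⟨j, Finset.mem_univ j, by nlinarith [(hq j).mp hj]⟩
    _ = 0 := Finset.sum_const_zero

theorem IsIsotropicRelation.neg_of_isEllipsoid {ι : Type*} [Fintype ι] {d : ℕ}
    {x : ι → Fin d → ℝ} {c : ι → ℝ} {t : ℝ} (h : IsIsotropicRelation x c t)
    (hpos : ∃ i, 0 < c i) {E : Set (Fin d → ℝ)} (hE : IsEllipsoid E)
    (hcE : ∀ i, 0 < c i ↔ x i ∈ E) : t < 0 := by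
  obtain ⟨μ, A, hA, rfl⟩ := hE
  have hsum := (h.sub_const μ).sum_mul_dotProduct_mulVec A
  exact neg_of_mul_neg_left (hsum ▸ sum_mul_neg_of_pos_iff_lt_one h.1 hpos hcE)
    hA.posSemidef.trace_nonneg

theorem not_shatters_ellipsoids_of_lt_card {d : ℕ} (hd : 0 < d) {X : Finset (Fin d → ℝ)}
    (hX : (d ^ 2 + 3 * d) / 2 < X.card) :
    ¬ Shatters {E : Set (Fin d → ℝ) | IsEllipsoid E} (X : Set (Fin d → ℝ)) := by
  intro hshatters
  have : Nonempty (Fin d) := ⟨⟨0, hd⟩⟩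
  obtain ⟨c, hc, t, hct⟩ :=
    exists_isIsotropicRelation (by simpa using hX) (Subtype.val : X → Fin d → ℝ)
  have hsign {c : X → ℝ} {t : ℝ} (hct : IsIsotropicRelation Subtype.val c t) (hc : c ≠ 0) :
      t < 0 := by
    obtain ⟨E, hE, hcE⟩ := hshatters.exists_forall_iff_mem (0 < c ·)
    obtain ⟨i, -, hi⟩ := Finset.exists_pos_of_sum_zero_of_exists_nonzero c hct.1
      (by simpa [funext_iff] using hc)
    exact hct.neg_of_isEllipsoid ⟨i, hi⟩ hE hcE
  linarith [hsign hct hc, hsign hct.neg (neg_ne_zero.mpr hc)]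

/-- No subset of `ℝ^d` of cardinality `(d² + 3d)/2 + 1` is shattered by the class
of `d`-dimensional ellipsoids; i.e. the VC dimension of this class is at most
`(d² + 3d)/2`. -/
theorem vcDim_ellipsoids_upper (d : ℕ) (hd : 0 < d) :
    (∀ X : Finset (Fin d → ℝ), X.card = (d ^ 2 + 3 * d) / 2 + 1 →
      ¬ Shatters {E : Set (Fin d → ℝ) | IsEllipsoid E} (X : Set (Fin d → ℝ))) ∧
    vcDim {E : Set (Fin d → ℝ) | IsEllipsoid E} ≤ ((d ^ 2 + 3 * d) / 2 : ℕ) := by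
  have h := fun (X : Finset (Fin d → ℝ)) (hX : X.card = (d ^ 2 + 3 * d) / 2 + 1) =>
    not_shatters_ellipsoids_of_lt_card hd (X := X) (by omega)
  exact ⟨h, vcDim_le_of_forall_card_eq_not_shatters h⟩
end

section
/- Let d ≥ 1 and B = (d² + 3d)/2. There exist a finite set S ⊂ S^{d−1} with |S| = B and ε > 0 such that S is shattered by the class of sets { x ∈ ℝ^d : b₁x₁² + ⋯ + b_d x_d² + b_{d+1}x₁x₂ + ⋯ + b_{B−d}x_{d−1}x_d + b_{B−d+1}x₁ + ⋯ + b_B x_d − 1 < 0 } over all b ∈ ℝ^B with ‖b − a‖_∞ < ε, where a ∈ ℝ^B has its first d components equal to 1 and all other components equal to 0; moreover every quadratic form x ↦ b₁x₁² + ⋯ + b_d x_d² + b_{d+1}x₁x₂ + ⋯ + b_{B−d}x_{d−1}x_d with ‖b − a‖_∞ < ε is positive definite, so each such set is a d-dimensional ellipsoid. -/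
/-- Index type for the coordinates of `ℝ^B`, `B = (d² + 3d)/2`: one coordinate
for each square `xᵢ²`, one for each product `xᵢxⱼ` (`i < j`), and one for each
linear term `xᵢ`. -/
abbrev QIdx (d : ℕ) : Type :=
  Fin d ⊕ ({p : Fin d × Fin d // p.1 < p.2} ⊕ Fin d)

/-- The map `φ : ℝ^d → ℝ^B` sending `x` to
`(x₁², …, x_d², x₁x₂, …, x_{d-1}x_d, x₁, …, x_d)`. -/
def phi {d : ℕ} (x : Fin d → ℝ) : QIdx d → ℝ :=
  Sum.elim (fun i => x i ^ 2)
    (Sum.elim (fun p => x p.1.1 * x p.1.2) (fun i => x i))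

/-- The quadratic form `q_a(x) = Σᵢ a_i xᵢ² + Σ_{i<j} a_{ij} xᵢxⱼ` determined by
the coefficient vector `a ∈ ℝ^B`. -/
def qform {d : ℕ} (a : QIdx d → ℝ) (x : Fin d → ℝ) : ℝ :=
  ∑ i, a (Sum.inl i) * x i ^ 2 +
    ∑ p : {p : Fin d × Fin d // p.1 < p.2}, a (Sum.inr (Sum.inl p)) * (x p.1.1 * x p.1.2)

/-- The quadratic polynomial `p_a(x) = q_a(x) + Σᵢ b_i xᵢ` determined by `a`. -/
def pform {d : ℕ} (a : QIdx d → ℝ) (x : Fin d → ℝ) : ℝ :=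
  qform a x + ∑ i, a (Sum.inr (Sum.inr i)) * x i

open Matrix

/-- The coefficient vector `a ∈ ℝ^B` whose first `d` components (those of the
squares `xᵢ²`) are `1` and whose remaining components are `0`. -/
def aZero (d : ℕ) : QIdx d → ℝ := Sum.elim (fun _ => 1) (fun _ => 0)

/-!
The points are `±eᵢ` and `(eᵢ + eⱼ)/√2` for `i < j`. Evaluating `p_c` at these `B` points is
an invertible linear map of `c`, so every sign pattern `t` is interpolated by some `c`. Since
`p_a(x) = ‖x‖² = 1` on the sphere, `b = a + δc` gives `p_b - 1 = δt` at the points, which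
cuts out any prescribed subset, and `δ` can be taken as small as we like. Near `a` the form
`q_b` is a small perturbation of `‖x‖²`, hence positive definite, and completing the square
turns `{p_b < 1}` into an ellipsoid.
-/

open Finset Real

lemma QuadraticForm.dotProduct_toMatrix'_mulVec {R n : Type*} [CommRing R] [Invertible (2 : R)]
    [Fintype n] [DecidableEq n] (Q : QuadraticForm R (n → R)) (x : n → R) :
    x ⬝ᵥ Q.toMatrix' *ᵥ x = Q x := by
  rw [QuadraticForm.toMatrix', ← Matrix.toLinearMap₂'_apply', Matrix.toLinearMap₂'_toMatrix']
  exact QuadraticMap.associated_eq_self_apply R Q x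

lemma abs_mul_le_sum_sq {ι : Type*} [Fintype ι] (x : ι → ℝ) (i j : ι) :
    |x i * x j| ≤ ∑ l, x l ^ 2 := by
  have hi := single_le_sum (fun l _ => sq_nonneg (x l)) (mem_univ i)
  have hj := single_le_sum (fun l _ => sq_nonneg (x l)) (mem_univ j)
  rw [abs_le]
  constructor <;> nlinarith [sq_nonneg (x i + x j), sq_nonneg (x i - x j)]

lemma eq_of_mem_ordered_pair {α : Type*} [Preorder α] {p q : {p : α × α // p.1 < p.2}}
    (h₁ : q.1.1 = p.1.1 ∨ q.1.1 = p.1.2) (h₂ : q.1.2 = p.1.1 ∨ q.1.2 = p.1.2) : q = p := by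
  have hp := p.2
  have hq := q.2
  rcases h₁ with h₁ | h₁ <;> rcases h₂ with h₂ | h₂ <;> rw [h₁, h₂] at hq
  · exact absurd hq (lt_irrefl _)
  · exact Subtype.ext (Prod.ext h₁ h₂)
  · exact absurd hq hp.asymm
  · exact absurd hq (lt_irrefl _)

lemma inv_sqrt_two_sq : (√2)⁻¹ ^ 2 = (1 / 2 : ℝ) := by
  rw [inv_pow, sq_sqrt zero_le_two, one_div]

lemma card_subtype_fst_lt_snd (d : ℕ) :
    Fintype.card {p : Fin d × Fin d // p.1 < p.2} = d * (d - 1) / 2 := by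
  let e : {p : Fin d × Fin d // p.1 < p.2} ≃ Σ j : Fin d, Fin j :=
    { toFun := fun p => ⟨p.1.2, ⟨p.1.1, p.2⟩⟩
      invFun := fun q => ⟨(⟨q.2, q.2.2.trans q.1.2⟩, q.1), q.2.2⟩
      left_inv := fun _ => rfl
      right_inv := fun _ => rfl }
  rw [Fintype.card_congr e, Fintype.card_sigma]
  simp only [Fintype.card_fin]
  rw [Fin.sum_univ_eq_sum_range (fun i => i) d, sum_range_id]

lemma card_QIdx (d : ℕ) : Fintype.card (QIdx d) = (d ^ 2 + 3 * d) / 2 := by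
  have hsq : d ^ 2 + 3 * d = d * (d - 1) + 2 * (2 * d) := by
    cases d with
    | zero => rfl
    | succ n => simp only [Nat.add_sub_cancel]; ring
  simp only [Fintype.card_sum, Fintype.card_fin, card_subtype_fst_lt_snd, hsq]
  rw [Nat.add_mul_div_left _ _ two_pos]
  ring

section

variable {d : ℕ}

lemma qform_add (a c : QIdx d → ℝ) (x : Fin d → ℝ) :
    qform (a + c) x = qform a x + qform c x := by
  simp only [qform, Pi.add_apply, add_mul, sum_add_distrib]
  ring

lemma pform_add (a c : QIdx d → ℝ) (x : Fin d → ℝ) :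
    pform (a + c) x = pform a x + pform c x := by
  simp only [pform, qform_add, Pi.add_apply, add_mul, sum_add_distrib]
  ring

lemma pform_smul (δ : ℝ) (c : QIdx d → ℝ) (x : Fin d → ℝ) :
    pform (δ • c) x = δ * pform c x := by
  simp only [pform, qform, Pi.smul_apply, smul_eq_mul, mul_add, mul_sum, mul_assoc]

lemma qform_aZero (x : Fin d → ℝ) : qform (aZero d) x = ∑ i, x i ^ 2 := by
  rw [qform]
  simp [aZero]

lemma pform_aZero (x : Fin d → ℝ) : pform (aZero d) x = ∑ i, x i ^ 2 := by
  rw [pform, qform_aZero]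
  simp [aZero]

lemma abs_qform_le (c : QIdx d → ℝ) (x : Fin d → ℝ) :
    |qform c x| ≤
      (Fintype.card {p : Fin d × Fin d // p.1 < p.2} + 1) * ‖c‖ * ∑ i, x i ^ 2 := by
  have hc : ∀ m, |c m| ≤ ‖c‖ := fun m => by simpa using norm_le_pi_norm c m
  have hsq : |∑ i, c (.inl i) * x i ^ 2| ≤ ‖c‖ * ∑ i, x i ^ 2 := by
    refine (abs_sum_le_sum_abs _ _).trans ?_
    rw [mul_sum]
    refine sum_le_sum fun i _ => ?_
    rw [abs_mul, abs_sq]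
    exact mul_le_mul_of_nonneg_right (hc _) (sq_nonneg _)
  have hpair : |∑ p : {p : Fin d × Fin d // p.1 < p.2}, c (.inr (.inl p)) * (x p.1.1 * x p.1.2)|
      ≤ Fintype.card {p : Fin d × Fin d // p.1 < p.2} * (‖c‖ * ∑ i, x i ^ 2) := by
    refine (abs_sum_le_sum_abs _ _).trans ?_
    refine (sum_le_sum (g := fun _ => ‖c‖ * ∑ i, x i ^ 2) fun p _ => ?_).trans_eq (by simp)
    rw [abs_mul]
    exact mul_le_mul (hc _) (abs_mul_le_sum_sq x _ _) (abs_nonneg _) (norm_nonneg _)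
  calc |qform c x| ≤ |∑ i, c (.inl i) * x i ^ 2| +
        |∑ p : {p : Fin d × Fin d // p.1 < p.2}, c (.inr (.inl p)) * (x p.1.1 * x p.1.2)| :=
        abs_add_le _ _
    _ ≤ _ := by linarith

lemma qform_pos_of_norm_sub_lt {b : QIdx d → ℝ}
    (hb : ‖b - aZero d‖ < (Fintype.card {p : Fin d × Fin d // p.1 < p.2} + 1 : ℝ)⁻¹)
    {x : Fin d → ℝ} (hx : x ≠ 0) : 0 < qform b x := by
  have hN : 0 < ∑ i, x i ^ 2 := by
    obtain ⟨i, hi⟩ := Function.ne_iff.mp hx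
    exact sum_pos' (fun l _ => sq_nonneg (x l)) ⟨i, mem_univ i, pow_two_pos_of_ne_zero hi⟩
  have hC : (Fintype.card {p : Fin d × Fin d // p.1 < p.2} + 1 : ℝ) * ‖b - aZero d‖ < 1 := by
    rwa [← lt_inv_mul_iff₀ (by positivity), mul_one]
  have hbound := abs_qform_le (b - aZero d) x
  have hsplit : qform b x = ∑ i, x i ^ 2 + qform (b - aZero d) x := by
    rw [← qform_aZero, ← qform_add, add_sub_cancel]
  rw [hsplit]
  nlinarith [neg_abs_le (qform (b - aZero d) x)]

lemma isEllipsoid_of_posDef {A : Matrix (Fin d) (Fin d) ℝ} (hA : A.PosDef) (v : Fin d → ℝ) :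
    IsEllipsoid {x | x ⬝ᵥ A *ᵥ x + v ⬝ᵥ x - 1 < 0} := by
  set μ : Fin d → ℝ := -(1 / 2 : ℝ) • A⁻¹ *ᵥ v
  set k : ℝ := μ ⬝ᵥ A *ᵥ μ
  have hAμ : A *ᵥ μ = -(1 / 2 : ℝ) • v := by
    rw [Matrix.mulVec_smul, Matrix.mulVec_mulVec,
      Matrix.mul_nonsing_inv _ hA.det_pos.ne'.isUnit, Matrix.one_mulVec]
  have hk : 0 ≤ k := by
    rcases eq_or_ne μ 0 with h | h
    · simp [k, h]
    · simpa using (hA.dotProduct_mulVec_pos h).le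
  have hsquare : ∀ x, (x - μ) ⬝ᵥ A *ᵥ (x - μ) = x ⬝ᵥ A *ᵥ x + v ⬝ᵥ x + k := by
    intro x
    have hsymm : μ ⬝ᵥ A *ᵥ x = x ⬝ᵥ A *ᵥ μ := by
      rw [Matrix.dotProduct_mulVec, ← Matrix.mulVec_transpose,
        (Matrix.isHermitian_iff_isSymm.mp hA.isHermitian).eq, dotProduct_comm]
    simp only [dotProduct_comm v x, Matrix.mulVec_sub, sub_dotProduct, dotProduct_sub, hsymm,
      hAμ, dotProduct_smul, smul_eq_mul, k]
    ring
  refine ⟨μ, (1 + k)⁻¹ • A, hA.smul (by positivity), ?_⟩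
  ext x
  simp only [Set.mem_ofPred_eq, Matrix.smul_mulVec, dotProduct_smul, smul_eq_mul, hsquare,
    inv_mul_lt_iff₀ (by positivity : (0 : ℝ) < 1 + k)]
  constructor <;> intro h <;> linarith

noncomputable def qformQuadraticForm (b : QIdx d → ℝ) : QuadraticForm ℝ (Fin d → ℝ) :=
  ∑ i, b (.inl i) • QuadraticMap.proj i i +
    ∑ p : {p : Fin d × Fin d // p.1 < p.2}, b (.inr (.inl p)) • QuadraticMap.proj p.1.1 p.1.2

lemma qformQuadraticForm_apply (b : QIdx d → ℝ) (x : Fin d → ℝ) :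
    qformQuadraticForm b x = qform b x := by
  simp [qformQuadraticForm, qform, QuadraticMap.proj_apply, sq]

lemma isEllipsoid_of_qform_pos {b : QIdx d → ℝ} (hb : ∀ x, x ≠ 0 → 0 < qform b x) :
    IsEllipsoid {x | pform b x - 1 < 0} := by
  have hQ : (qformQuadraticForm b).PosDef := fun x hx => by
    rw [qformQuadraticForm_apply]; exact hb x hx
  have hset : {x | pform b x - 1 < 0} = {x | x ⬝ᵥ (qformQuadraticForm b).toMatrix' *ᵥ x +
      (fun i => b (.inr (.inr i))) ⬝ᵥ x - 1 < 0} := by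
    ext x
    rw [Set.mem_ofPred_eq, Set.mem_ofPred_eq, QuadraticForm.dotProduct_toMatrix'_mulVec,
      qformQuadraticForm_apply, pform, dotProduct]
  rw [hset]
  exact isEllipsoid_of_posDef (QuadraticForm.posDef_toMatrix' hQ) _

lemma pform_single (c : QIdx d → ℝ) (i : Fin d) (s : ℝ) :
    pform c (Pi.single i s) = c (.inl i) * s ^ 2 + c (.inr (.inr i)) * s := by
  have hpair : ∀ p : {p : Fin d × Fin d // p.1 < p.2},
      (Pi.single i s : Fin d → ℝ) p.1.1 * (Pi.single i s : Fin d → ℝ) p.1.2 = 0 := by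
    intro p
    by_cases h : p.1.1 = i
    · rw [Pi.single_eq_of_ne fun h' => p.2.ne (h.trans h'.symm), mul_zero]
    · rw [Pi.single_eq_of_ne h, zero_mul]
  simp only [pform, qform, hpair, mul_zero, sum_const_zero, add_zero]
  simp [Pi.single_apply]

lemma pform_smul_single_add_single (c : QIdx d → ℝ) (p : {p : Fin d × Fin d // p.1 < p.2})
    (r : ℝ) :
    pform c (r • (Pi.single p.1.1 1 + Pi.single p.1.2 1)) =
      r ^ 2 * (c (.inl p.1.1) + c (.inl p.1.2) + c (.inr (.inl p))) +
        r * (c (.inr (.inr p.1.1)) + c (.inr (.inr p.1.2))) := by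
  set x : Fin d → ℝ := r • (Pi.single p.1.1 1 + Pi.single p.1.2 1)
  have hx : ∀ l, x l = (if l = p.1.1 then r else 0) + (if l = p.1.2 then r else 0) := by
    intro l; simp [x, Pi.single_apply]
  have hsq : ∀ l, x l ^ 2 =
      (if l = p.1.1 then r ^ 2 else 0) + (if l = p.1.2 then r ^ 2 else 0) := by
    intro l
    rw [hx]
    split_ifs with h h' <;> first | exact absurd (h.symm.trans h') p.2.ne | ring
  have hpair : ∀ q : {p : Fin d × Fin d // p.1 < p.2}, q ≠ p → x q.1.1 * x q.1.2 = 0 := by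
    intro q hqp
    by_cases h₁ : q.1.1 = p.1.1 ∨ q.1.1 = p.1.2
    · have h₂ : ¬ (q.1.2 = p.1.1 ∨ q.1.2 = p.1.2) := fun h₂ =>
        hqp (eq_of_mem_ordered_pair h₁ h₂)
      push Not at h₂
      simp [hx, h₂.1, h₂.2]
    · push Not at h₁
      simp [hx, h₁.1, h₁.2]
  have hpp : x p.1.1 * x p.1.2 = r ^ 2 := by simp [hx, p.2.ne, p.2.ne']; ring
  rw [pform, qform, Fintype.sum_eq_single p fun q hq => by rw [hpair q hq, mul_zero], hpp]
  simp only [hsq]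
  simp only [hx, mul_add, mul_ite, mul_zero, sum_add_distrib, sum_ite_eq', mem_univ, if_true]
  ring

noncomputable def spherePoint : QIdx d → Fin d → ℝ :=
  Sum.elim (fun i => Pi.single i 1)
    (Sum.elim (fun p => (√2)⁻¹ • (Pi.single p.1.1 1 + Pi.single p.1.2 1))
      (fun i => Pi.single i (-1)))

lemma pform_aZero_spherePoint (k : QIdx d) : pform (aZero d) (spherePoint k) = 1 := by
  rcases k with i | p | i
  · simp [spherePoint, pform_single, aZero]
  · simp only [spherePoint, Sum.elim_inl, Sum.elim_inr, pform_smul_single_add_single, aZero,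
      inv_sqrt_two_sq]
    norm_num
  · simp [spherePoint, pform_single, aZero]

lemma exists_pform_spherePoint_eq (t : QIdx d → ℝ) :
    ∃ c : QIdx d → ℝ, ∀ k, pform c (spherePoint k) = t k := by
  set s : Fin d → ℝ := fun i => (t (.inl i) + t (.inr (.inr i))) / 2
  set v : Fin d → ℝ := fun i => (t (.inl i) - t (.inr (.inr i))) / 2
  set u : {p : Fin d × Fin d // p.1 < p.2} → ℝ := fun p =>
    2 * (t (.inr (.inl p)) - (√2)⁻¹ * (v p.1.1 + v p.1.2)) - s p.1.1 - s p.1.2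
  refine ⟨Sum.elim s (Sum.elim u v), fun k => ?_⟩
  rcases k with i | p | i
  · simp only [spherePoint, Sum.elim_inl, Sum.elim_inr, pform_single, s, v]
    ring
  · simp only [spherePoint, Sum.elim_inl, Sum.elim_inr, pform_smul_single_add_single,
      inv_sqrt_two_sq, u]
    ring
  · simp only [spherePoint, Sum.elim_inl, Sum.elim_inr, pform_single, s, v]
    ring

lemma spherePoint_injective : Function.Injective (spherePoint (d := d)) := by
  classical
  intro k k' h
  obtain ⟨c, hc⟩ := exists_pform_spherePoint_eq (fun m => if m = k then 1 else 0)
  have hk' := hc k'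
  rw [← h, hc k, if_pos rfl] at hk'
  split_ifs at hk' with hkk
  exacts [hkk.symm, absurd hk' one_ne_zero]

lemma shatters_range_spherePoint {ε : ℝ} (hε : 0 < ε) :
    Shatters {E : Set (Fin d → ℝ) |
        ∃ b : QIdx d → ℝ, ‖b - aZero d‖ < ε ∧ E = {x | pform b x - 1 < 0}}
      (Set.range spherePoint) := by
  classical
  intro Y hY
  obtain ⟨c, hc⟩ := exists_pform_spherePoint_eq fun k => if spherePoint k ∈ Y then -1 else 1
  set δ := ε / (‖c‖ + 1)
  have hδ : 0 < δ := by positivity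
  have hb : ‖(aZero d + δ • c) - aZero d‖ < ε := by
    rw [add_sub_cancel_left, norm_smul, Real.norm_of_nonneg hδ.le, div_mul_eq_mul_div,
      div_lt_iff₀ (by positivity)]
    nlinarith [norm_nonneg c]
  have hvalue : ∀ k, pform (aZero d + δ • c) (spherePoint k) - 1 =
      δ * if spherePoint k ∈ Y then -1 else 1 := by
    intro k
    rw [pform_add, pform_smul, pform_aZero_spherePoint, hc]
    ring
  refine ⟨_, ⟨aZero d + δ • c, hb, rfl⟩, ?_⟩
  ext x
  constructor
  · intro hx
    obtain ⟨k, rfl⟩ := hY hx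
    refine ⟨⟨k, rfl⟩, ?_⟩
    rw [Set.mem_ofPred_eq, hvalue, if_pos hx]
    linarith
  · rintro ⟨⟨k, rfl⟩, hk⟩
    rw [Set.mem_ofPred_eq, hvalue] at hk
    split_ifs at hk with hkY
    · exact hkY
    · linarith

end

theorem exists_shattered_sphere_points_general (d : ℕ) :
    ∃ (S : Finset (Fin d → ℝ)) (ε : ℝ), 0 < ε ∧
      (∀ x ∈ S, ∑ i, x i ^ 2 = 1) ∧
      S.card = (d ^ 2 + 3 * d) / 2 ∧
      Shatters {E : Set (Fin d → ℝ) |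
          ∃ b : QIdx d → ℝ, ‖b - aZero d‖ < ε ∧ E = {x | pform b x - 1 < 0}}
        (S : Set (Fin d → ℝ)) ∧
      (∀ b : QIdx d → ℝ, ‖b - aZero d‖ < ε → ∀ x : Fin d → ℝ, x ≠ 0 → 0 < qform b x) ∧
      (∀ b : QIdx d → ℝ, ‖b - aZero d‖ < ε → IsEllipsoid {x | pform b x - 1 < 0}) := by
  classical
  have hε : (0 : ℝ) < (Fintype.card {p : Fin d × Fin d // p.1 < p.2} + 1 : ℝ)⁻¹ := by
    positivity
  refine ⟨univ.image spherePoint, _, hε, ?_, ?_, ?_,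
    fun b hb _ hx => qform_pos_of_norm_sub_lt hb hx,
    fun b hb => isEllipsoid_of_qform_pos fun _ hx => qform_pos_of_norm_sub_lt hb hx⟩
  · simp only [mem_image, mem_univ, true_and, forall_exists_index, forall_apply_eq_imp_iff]
    intro k
    rw [← pform_aZero, pform_aZero_spherePoint]
  · rw [card_image_of_injective _ spherePoint_injective, card_univ, card_QIdx]
  · rw [coe_image, coe_univ, Set.image_univ]
    exact shatters_range_spherePoint hε

/-- There exist a set `S` of `B = (d² + 3d)/2` points on the unit sphere and
`ε > 0` such that `S` is shattered by the class of sets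
`{x : p_b(x) - 1 < 0}` over all `b` with `‖b - a‖_∞ < ε` (where `a = aZero d`);
moreover for every such `b` the quadratic form `q_b` is positive definite, and
every such set is a `d`-dimensional ellipsoid.
(The norm on `QIdx d → ℝ` is the sup norm.) -/
theorem exists_shattered_sphere_points (d : ℕ) (hd : 0 < d) :
    ∃ (S : Finset (Fin d → ℝ)) (ε : ℝ), 0 < ε ∧
      (∀ x ∈ S, ∑ i, x i ^ 2 = 1) ∧
      S.card = (d ^ 2 + 3 * d) / 2 ∧
      Shatters {E : Set (Fin d → ℝ) |
          ∃ b : QIdx d → ℝ, ‖b - aZero d‖ < ε ∧ E = {x | pform b x - 1 < 0}}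
        (S : Set (Fin d → ℝ)) ∧
      (∀ b : QIdx d → ℝ, ‖b - aZero d‖ < ε → ∀ x : Fin d → ℝ, x ≠ 0 → 0 < qform b x) ∧
      (∀ b : QIdx d → ℝ, ‖b - aZero d‖ < ε → IsEllipsoid {x | pform b x - 1 < 0}) :=
  exists_shattered_sphere_points_general d
end
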